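/- For non-negative integers g, d, r with r ≥ 1, d ≥ r, and ρ = (r+1)(d-r) - g·r ≥ 0 (so that g - d + r ≥ 0 may fail; assume d ≤ g + r so all factorials below make sense), the Castelnuovo number g!·∏_{i=0}^{r} i!/(g-d+r+i)! is a positive integer. -/

import Mathlib

/-!
With `s = g + r - d` and `n = r + 1` the condition `ρ ≥ 0` says `s n ≤ g`, so it suffices that
`∏_{i<n} (s+i)! ∣ (s n)! ∏_{i<n} i!`: the Castelnuovo number is `g! / (s n)!` times the hook
length count of standard Young tableaux of the `n × s` rectangle. Multiplying by `∏_{i<s} i!` gives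
the symmetric form `∏_{i<s+n} i! ∣ (s n)! ∏_{i<s} i! ∏_{i<n} i!`, which by Legendre's formula
reduces to `∑_{i<s+n} ⌊i/q⌋ ≤ ⌊s n/q⌋ + ∑_{i<s} ⌊i/q⌋ + ∑_{i<n} ⌊i/q⌋` for every prime power `q`.
As `∑_{i<q} ⌊(m+i)/q⌋ = m`, replacing `n` by `n + q` adds `s + n` to the left side and `s + n`
to the right, so one may assume `s, n < q`, where the inequality is `(q - s)(q - n) ≥ 0`.
-/

open Finset Nat

section FloorSums

variable {q : ℕ}

theorem sum_range_div_eq_zero {t : ℕ} (ht : t ≤ q) : ∑ i ∈ range t, i / q = 0 :=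
  sum_eq_zero fun _ hi => Nat.div_eq_of_lt ((mem_range.1 hi).trans_le ht)

theorem sum_range_add_div (hq : 0 < q) (m : ℕ) : ∑ i ∈ range q, (m + i) / q = m := by
  induction m with
  | zero => simpa using sum_range_div_eq_zero le_rfl
  | succ m ih =>
    have shift := (sum_range_succ' (fun i => (m + i) / q) q).symm.trans
      (sum_range_succ (fun i => (m + i) / q) q)
    simp only [← add_assoc, add_zero, Nat.add_div_right m hq, ih] at shift
    simp only [add_right_comm m 1]
    omega

theorem sum_range_div_add_le_of_lt {s n : ℕ} (hs : s < q) (hn : n < q) :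
    ∑ i ∈ range (s + n), i / q ≤ s * n / q := by
  rcases lt_or_ge (s + n) q with h | h
  · simp [sum_range_div_eq_zero h.le]
  obtain ⟨t, ht⟩ := exists_add_of_le h
  rw [add_comm q t] at ht
  rw [ht, sum_range_add, sum_range_div_eq_zero (by omega), sum_range_add_div (by omega),
    zero_add, Nat.le_div_iff_mul_le (by omega)]
  nlinarith [Nat.mul_le_mul (Nat.sub_le_sub_left hs.le q) (Nat.sub_le_sub_left hn.le q)]

theorem sum_range_div_add_le (hq : 0 < q) (s n : ℕ) :
    ∑ i ∈ range (s + n), i / q ≤ s * n / q + (∑ i ∈ range s, i / q + ∑ i ∈ range n, i / q) := by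
  induction hm : s + n using Nat.strong_induction_on generalizing s n with
  | _ m ih =>
    wlog hsn : s ≤ n generalizing s n
    · simpa only [add_comm s, mul_comm s, add_comm (∑ i ∈ range s, i / q)] using
        this n s (by omega) (by omega)
    rcases lt_or_ge n q with hn | hn
    · subst hm
      exact (sum_range_div_add_le_of_lt (hsn.trans_lt hn) hn).trans le_self_add
    obtain ⟨n, rfl⟩ := Nat.exists_eq_add_of_le' hn
    subst hm
    have := ih (s + n) (by omega) s n rfl
    rw [← add_assoc, sum_range_add, sum_range_add _ n, sum_range_add_div hq, sum_range_add_div hq,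
      mul_add, Nat.add_mul_div_right _ _ hq]
    omega

end FloorSums

theorem factorization_prod_range_factorial {p m M : ℕ} (hp : p.Prime) (hm : m ≤ M) :
    (∏ i ∈ range m, i !).factorization p = ∑ k ∈ Ico 1 (log p M + 1), ∑ i ∈ range m, i / p ^ k := by
  rw [factorization_prod fun i _ => factorial_ne_zero i, Finsupp.finsetSum_apply, sum_comm]
  exact sum_congr rfl fun i hi =>
    factorization_factorial hp (lt_succ_of_le (log_mono_right ((mem_range.1 hi).le.trans hm)))

theorem prod_range_factorial_dvd (s n : ℕ) :
    ∏ i ∈ range (s + n), i ! ∣ (s * n)! * ((∏ i ∈ range s, i !) * ∏ i ∈ range n, i !) := by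
  have hprod (m : ℕ) : ∏ i ∈ range m, i ! ≠ 0 := prod_ne_zero_iff.2 fun i _ => factorial_ne_zero i
  rw [← factorization_prime_le_iff_dvd (hprod _)
    (mul_ne_zero (factorial_ne_zero _) (mul_ne_zero (hprod _) (hprod _)))]
  intro p hp
  let M := s * n + (s + n)
  rw [Nat.factorization_mul (factorial_ne_zero _) (mul_ne_zero (hprod _) (hprod _)),
    Nat.factorization_mul (hprod _) (hprod _), Finsupp.add_apply, Finsupp.add_apply,
    factorization_factorial hp (lt_succ_of_le (log_mono_right (by omega : s * n ≤ M))),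
    factorization_prod_range_factorial hp (by omega : s + n ≤ M),
    factorization_prod_range_factorial hp (by omega : s ≤ M),
    factorization_prod_range_factorial hp (by omega : n ≤ M),
    ← sum_add_distrib, ← sum_add_distrib]
  exact sum_le_sum fun k _ => sum_range_div_add_le (pow_pos hp.pos k) s n

theorem prod_range_factorial_add_dvd (s n : ℕ) :
    ∏ i ∈ range n, (s + i)! ∣ (s * n)! * ∏ i ∈ range n, i ! := by
  have h := prod_range_factorial_dvd s n
  rw [prod_range_add, mul_left_comm] at h
  exact Nat.dvd_of_mul_dvd_mul_left (prod_pos fun i _ => factorial_pos i) h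

theorem castelnuovo_number_pos_int_general
    (g d r : ℕ) (hρ : 0 ≤ ((r : ℤ) + 1) * ((d : ℤ) - r) - (g : ℤ) * r) :
    ∃ N : ℕ, 0 < N ∧ (N : ℚ) =
      (Nat.factorial g : ℚ) * ∏ i ∈ Finset.range (r + 1),
        (Nat.factorial i : ℚ) / (Nat.factorial (g + r - d + i) : ℚ) := by
  have hs : (g + r - d) * (r + 1) ≤ g := by
    rcases le_total d (g + r) with h | h
    · zify [h]
      linarith
    · simp [Nat.sub_eq_zero_of_le h]
  have hdvd : ∏ i ∈ range (r + 1), (g + r - d + i)! ∣ g ! * ∏ i ∈ range (r + 1), i ! :=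
    (prod_range_factorial_add_dvd _ _).trans
      (mul_dvd_mul_right (factorial_dvd_factorial hs) _)
  have hden : 0 < ∏ i ∈ range (r + 1), (g + r - d + i)! := prod_pos fun i _ => factorial_pos _
  refine ⟨g ! * (∏ i ∈ range (r + 1), i !) / ∏ i ∈ range (r + 1), (g + r - d + i)!,
    Nat.div_pos (Nat.le_of_dvd (by positivity) hdvd) hden, ?_⟩
  rw [Nat.cast_div hdvd (by positivity), Nat.cast_mul, Nat.cast_prod, Nat.cast_prod,
    prod_div_distrib, mul_div_assoc]

/-- For non-negative integers `g, d, r` with `r ≥ 1`, `d ≥ r`,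
`d ≤ g + r` (so `g - d + r ≥ 0`), and Brill–Noether number
`ρ = (r+1)(d-r) - g·r ≥ 0`, the Castelnuovo number
`g!·∏_{i=0}^{r} i!/(g-d+r+i)!` is a positive integer. -/
theorem castelnuovo_number_pos_int
    (g d r : ℕ) (hr : 1 ≤ r) (hdr : r ≤ d) (hdg : d ≤ g + r)
    (hρ : 0 ≤ ((r : ℤ) + 1) * ((d : ℤ) - r) - (g : ℤ) * r) :
    ∃ N : ℕ, 0 < N ∧ (N : ℚ) =
      (Nat.factorial g : ℚ) * ∏ i ∈ Finset.range (r + 1),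
        (Nat.factorial i : ℚ) / (Nat.factorial (g + r - d + i) : ℚ) :=
  castelnuovo_number_pos_int_general g d r hρ
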